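/- arXiv:1607.04513 — 6 statements merged into one kernel-verified Lean document; each statement's English description precedes it below -/
import Mathlib

section
/- Let n be a natural number, a_0,…,a_n integers, ℓ ≥ 1 an integer, p a prime number, and s a complex number with Re(s) > n + 1/ℓ. Then the series ∑_{m=1}^∞ (∑_{k=0}^n a_k·p^{ℓkm}) / m · p^{-ℓsm} converges absolutely, each complex number 1 − p^{ℓ(k−s)} (principal complex power of the positive real p) is nonzero, and exp( ∑_{m=1}^∞ (∑_{k=0}^n a_k·p^{ℓkm}) / m · p^{-ℓsm} ) = ∏_{k=0}^n (1 − p^{ℓ(k−s)})^{−a_k}, where the integer exponents −a_k are taken as zpow. -/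
open Complex Finset

/-!
With `z_k = p^{ℓ(k-s)}` we have `|z_k| < 1` for `k ≤ n < Re s`, and the `m`-th term of the series
is `∑_k a_k z_k^m / m`. Summing over `m` termwise gives `∑_k a_k · (-log (1 - z_k))` by the Taylor
series of the logarithm, and exponentiating turns this sum into the product of `(1 - z_k)^{-a_k}`.
-/

namespace Complex

theorem hasSum_pnat_pow_div_neg_log {z : ℂ} (hz : ‖z‖ < 1) :
    HasSum (fun m : ℕ+ => z ^ (m : ℕ) / ((m : ℕ) : ℂ)) (-log (1 - z)) := by
  rw [hasSum_pnat_iff (f := fun m : ℕ => z ^ m / (m : ℂ))]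
  simpa using hasSum_taylorSeries_neg_log hz

theorem exp_intCast_mul_neg_log {w : ℂ} (hw : w ≠ 0) (a : ℤ) :
    exp (a * -log w) = w ^ (-a) := by
  rw [mul_neg, ← neg_mul, ← Int.cast_neg, exp_int_mul, exp_log hw]

theorem norm_ofReal_cpow_lt_one {x : ℝ} (hx : 1 < x) {w : ℂ} (hw : w.re < 0) :
    ‖(x : ℂ) ^ w‖ < 1 := by
  rw [norm_cpow_eq_rpow_re_of_pos (by linarith)]
  exact Real.rpow_lt_one_of_one_lt_of_neg hx hw

theorem cpow_natCast_mul_cpow_neg_mul {x : ℂ} (hx : x ≠ 0) (u v w : ℂ) (j : ℕ) (m : ℕ)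
    (hj : (j : ℂ) = u * v * m) :
    x ^ j * x ^ (-u * w * m) = (x ^ (u * (v - w))) ^ m := by
  rw [← cpow_nat_mul, ← cpow_natCast, ← cpow_add _ _ hx, hj]
  ring_nf

end Complex

section LogZeta

variable {ι : Type*} (S : Finset ι) (a : ι → ℤ) {z : ι → ℂ}

theorem hasSum_sum_intCast_mul_pow_div (hz : ∀ k ∈ S, ‖z k‖ < 1) :
    HasSum (fun m : ℕ+ => (∑ k ∈ S, (a k : ℂ) * z k ^ (m : ℕ)) / ((m : ℕ) : ℂ))
      (∑ k ∈ S, (a k : ℂ) * -log (1 - z k)) := by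
  simp_rw [Finset.sum_div, mul_div_assoc]
  exact hasSum_sum fun k hk => (hasSum_pnat_pow_div_neg_log (hz k hk)).mul_left _

theorem summable_norm_sum_intCast_mul_pow_div (hz : ∀ k ∈ S, ‖z k‖ < 1) :
    Summable (fun m : ℕ+ => ‖(∑ k ∈ S, (a k : ℂ) * z k ^ (m : ℕ)) / ((m : ℕ) : ℂ)‖) := by
  have hterms : ∀ k ∈ S, Summable (fun m : ℕ+ => ‖(a k : ℂ) * (z k ^ (m : ℕ) / ((m : ℕ) : ℂ))‖) :=
    fun k hk => ((hasSum_pnat_pow_div_neg_log (hz k hk)).summable.mul_left _).norm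
  refine (summable_sum hterms).of_nonneg_of_le (fun _ => norm_nonneg _) fun m => ?_
  simp_rw [Finset.sum_div, mul_div_assoc]
  exact norm_sum_le _ _

theorem exp_tsum_sum_intCast_mul_pow_div (hz : ∀ k ∈ S, ‖z k‖ < 1) :
    exp (∑' m : ℕ+, (∑ k ∈ S, (a k : ℂ) * z k ^ (m : ℕ)) / ((m : ℕ) : ℂ))
      = ∏ k ∈ S, (1 - z k) ^ (-a k) := by
  rw [(hasSum_sum_intCast_mul_pow_div S a hz).tsum_eq, exp_sum]
  exact prod_congr rfl fun k hk =>
    exp_intCast_mul_neg_log (isUnit_one_sub_of_norm_lt_one (hz k hk)).ne_zero (a k)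

end LogZeta

/-- (iii) ⇒ (ii) of the main theorem on schemes of `F_{1^ℓ}`-type: if the point counts over
`F_{p^{ℓm}}` are given by the polynomial `N(Y) = ∑ a_k Y^k`, then the local zeta function over
`F_{p^ℓ}` equals `∏_{k=0}^n (1 - p^{ℓ(k-s)})^{-a_k}` for `Re(s) > n + 1/ℓ`. -/
theorem stmt_0 (n : ℕ) (a : ℕ → ℤ) (ℓ : ℕ) (hℓ : 1 ≤ ℓ) (p : ℕ) (hp : p.Prime) (s : ℂ)
    (hs : (n : ℝ) + 1 / (ℓ : ℝ) < s.re) :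
    Summable (fun m : ℕ+ =>
      ‖((∑ k ∈ Finset.range (n + 1), (a k : ℂ) * (p : ℂ) ^ (ℓ * k * (m : ℕ))) / ((m : ℕ) : ℂ))
        * (p : ℂ) ^ (-(ℓ : ℂ) * s * ((m : ℕ) : ℂ))‖)
    ∧ (∀ k ∈ Finset.range (n + 1), (1 : ℂ) - (p : ℂ) ^ ((ℓ : ℂ) * ((k : ℂ) - s)) ≠ 0)
    ∧ Complex.exp (∑' m : ℕ+,
        ((∑ k ∈ Finset.range (n + 1), (a k : ℂ) * (p : ℂ) ^ (ℓ * k * (m : ℕ))) / ((m : ℕ) : ℂ))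
          * (p : ℂ) ^ (-(ℓ : ℂ) * s * ((m : ℕ) : ℂ)))
      = ∏ k ∈ Finset.range (n + 1),
          ((1 : ℂ) - (p : ℂ) ^ ((ℓ : ℂ) * ((k : ℂ) - s))) ^ (-(a k)) := by
  set z : ℕ → ℂ := fun k => (p : ℂ) ^ ((ℓ : ℂ) * ((k : ℂ) - s))
  have hz : ∀ k ∈ range (n + 1), ‖z k‖ < 1 := by
    intro k hk
    have hkn : (k : ℝ) ≤ n := by exact_mod_cast Nat.lt_succ_iff.mp (mem_range.mp hk)
    have hℓ' : (0 : ℝ) < ℓ := by exact_mod_cast hℓ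
    have hre : ((ℓ : ℂ) * ((k : ℂ) - s)).re < 0 := by
      simp only [mul_re, natCast_re, natCast_im, sub_re, sub_im, zero_mul, sub_zero]
      nlinarith [one_div_pos.2 hℓ']
    simpa [z] using norm_ofReal_cpow_lt_one (by exact_mod_cast hp.one_lt : (1 : ℝ) < p) hre
  have hterm : ∀ m : ℕ+,
      ((∑ k ∈ range (n + 1), (a k : ℂ) * (p : ℂ) ^ (ℓ * k * (m : ℕ))) / ((m : ℕ) : ℂ))
        * (p : ℂ) ^ (-(ℓ : ℂ) * s * ((m : ℕ) : ℂ))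
      = (∑ k ∈ range (n + 1), (a k : ℂ) * z k ^ (m : ℕ)) / ((m : ℕ) : ℂ) := by
    intro m
    rw [div_mul_eq_mul_div, sum_mul]
    congr 1
    refine sum_congr rfl fun k _ => ?_
    rw [mul_assoc, cpow_natCast_mul_cpow_neg_mul (Nat.cast_ne_zero.2 hp.ne_zero) ℓ k s _ _
      (by push_cast; ring)]
  simp_rw [hterm]
  exact ⟨summable_norm_sum_intCast_mul_pow_div _ a hz,
    fun k hk => (isUnit_one_sub_of_norm_lt_one (hz k hk)).ne_zero,
    exp_tsum_sum_intCast_mul_pow_div _ a hz⟩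
end

section
/- Let q ≥ 2 be a natural number, n a natural number, a_0,…,a_n integers, and c : ℕ⁺ → ℤ a function for which there exist constants A ≥ 0 and B ∈ ℕ with |c(m)| ≤ A·q^{Bm} for all m ≥ 1. Suppose that for every real number s > max(n, B) + 1 one has exp( ∑_{m=1}^∞ c(m)/m · q^{−sm} ) = ∏_{k=0}^n (1 − q^{k−s})^{−a_k} (an identity of real numbers, the integer exponents −a_k taken as zpow; note 0 < q^{k−s} < 1 so each base is nonzero). Then c(m) = ∑_{k=0}^n a_k·q^{km} for every m ≥ 1. -/
open Finset Filter Topology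

/-!
Put `x = q^{-s}`. Taking logarithms, and expanding each `-log (1 - q^k x)` as `∑ (q^k x)^m / m`,
turns the hypothesis into the identity of power series
`∑ c(m)/m · x^m = ∑ N(q^m)/m · x^m` for all small `x > 0`; the growth bound on `c` is what makes
the left-hand side converge there. By the isolated zeros theorem, a power series vanishing at
points accumulating at `0` has zero coefficients, so `c(m) = N(q^m)`.
-/

section IdentityTheorem

variable {𝕜 : Type*} [NontriviallyNormedField 𝕜] [CompleteSpace 𝕜]

theorem eq_zero_of_frequently_hasSum_zero {a : ℕ → 𝕜}
    (h : ∃ᶠ x in 𝓝[≠] 0, HasSum (fun j => a j * x ^ j) 0) : a = 0 := by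
  set p := FormalMultilinearSeries.ofScalars 𝕜 a
  obtain ⟨x, hx, hx0⟩ := (h.and_eventually self_mem_nhdsWithin).exists
  have hrad : 0 < p.radius := by
    refine lt_of_lt_of_le ?_ (p.le_radius_of_tendsto (r := ‖x‖₊) (l := 0) ?_)
    · simpa using hx0
    · simpa [p, FormalMultilinearSeries.ofScalars_norm, norm_mul, norm_pow] using
        hx.summable.tendsto_atTop_zero.norm
  have hp : HasFPowerSeriesAt p.sum p 0 := (p.hasFPowerSeriesOnBall hrad).hasFPowerSeriesAt
  by_contra ha
  have hne : p ≠ 0 := by rwa [Ne, FormalMultilinearSeries.ofScalars_series_eq_zero]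
  obtain ⟨y, hy, hsum⟩ := ((hp.locally_ne_zero hne).and_frequently h).exists
  exact hy ((FormalMultilinearSeries.ofScalars_sum_eq a y).trans (by simpa using hsum.tsum_eq))

theorem eq_zero_of_frequently_hasSum_pnat_zero {d : ℕ+ → 𝕜}
    (h : ∃ᶠ x in 𝓝[≠] 0, HasSum (fun m : ℕ+ => d m * x ^ (m : ℕ)) 0) : d = 0 := by
  have hshift : ∃ᶠ x in 𝓝[≠] 0, HasSum (fun j : ℕ => d j.succPNat * x ^ j) 0 := by
    refine (h.and_eventually self_mem_nhdsWithin).mono fun x ⟨hx, (hx0 : x ≠ 0)⟩ => ?_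
    have := (Equiv.pnatEquivNat.symm.hasSum_iff.mpr hx).mul_left x⁻¹
    rw [mul_zero] at this
    refine (funext fun j => ?_ : (fun j : ℕ => d j.succPNat * x ^ j) = _) ▸ this
    simp [pow_succ', field]
  have := eq_zero_of_frequently_hasSum_zero hshift
  funext m
  simpa using congrFun this m.natPred

end IdentityTheorem

theorem hasSum_log_prod_one_sub_zpow_neg {ι : Type*} (s : Finset ι) (a : ι → ℤ) {y : ι → ℝ}
    (hy : ∀ k ∈ s, |y k| < 1) :
    HasSum (fun m : ℕ+ => (∑ k ∈ s, (a k : ℝ) * y k ^ (m : ℕ)) / m)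
      (Real.log (∏ k ∈ s, (1 - y k) ^ (-a k))) := by
  have hpos : ∀ k ∈ s, 0 < 1 - y k := fun k hk => by linarith [(abs_lt.mp (hy k hk)).2]
  rw [Real.log_prod fun k hk => (zpow_pos (hpos k hk) _).ne',
    hasSum_pnat_iff_hasSum_succ (f := fun m : ℕ => (∑ k ∈ s, (a k : ℝ) * y k ^ m) / m)]
  simp_rw [sum_div, Real.log_zpow]
  refine hasSum_sum fun k hk => ?_
  rw [Int.cast_neg, neg_mul, ← mul_neg]
  simpa only [Nat.cast_add, Nat.cast_one, mul_div_assoc] using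
    (Real.hasSum_pow_div_log_of_abs_lt_one (hy k hk)).mul_left (a k : ℝ)

theorem summable_pnat_div_mul_pow_of_abs_le {c : ℕ+ → ℝ} {A ρ x : ℝ}
    (hc : ∀ m : ℕ+, |c m| ≤ A * ρ ^ (m : ℕ)) (hρ : 0 ≤ ρ) (hx : 0 ≤ x) (hρx : ρ * x < 1) :
    Summable fun m : ℕ+ => c m / m * x ^ (m : ℕ) := by
  refine Summable.of_norm_bounded (g := fun m : ℕ+ => A * (ρ * x) ^ (m : ℕ))
    (summable_pnat_iff_summable_nat.mpr
      ((summable_geometric_of_lt_one (by positivity) hρx).mul_left A)) fun m => ?_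
  have hm : (1 : ℝ) ≤ (m : ℕ) := by exact_mod_cast m.pos
  calc ‖c m / m * x ^ (m : ℕ)‖ = |c m| / (m : ℕ) * x ^ (m : ℕ) := by
        rw [Real.norm_eq_abs, abs_mul, abs_div, abs_pow, abs_of_nonneg hx, Nat.abs_cast]
    _ ≤ |c m| * x ^ (m : ℕ) := by gcongr; exact div_le_self (abs_nonneg _) hm
    _ ≤ A * ρ ^ (m : ℕ) * x ^ (m : ℕ) := by gcongr; exact hc m
    _ = A * (ρ * x) ^ (m : ℕ) := by rw [mul_pow, mul_assoc]

theorem hasSum_log_prod_one_sub_rpow_sub_zpow_neg {Q : ℝ} (hQ : 1 < Q) (n : ℕ) (a : ℕ → ℤ) {s : ℝ}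
    (hs : (n : ℝ) < s) :
    HasSum (fun m : ℕ+ =>
        (∑ k ∈ range (n + 1), (a k : ℝ) * Q ^ (k * (m : ℕ))) / m * (Q ^ (-s)) ^ (m : ℕ))
      (Real.log (∏ k ∈ range (n + 1), (1 - Q ^ ((k : ℝ) - s)) ^ (-a k))) := by
  have hQ0 : 0 < Q := by linarith
  have hy : ∀ k ∈ range (n + 1), |Q ^ ((k : ℝ) - s)| < 1 := fun k hk => by
    have hk : (k : ℝ) ≤ n := by exact_mod_cast mem_range_succ_iff.mp hk
    rw [abs_of_pos (Real.rpow_pos_of_pos hQ0 _)]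
    exact Real.rpow_lt_one_of_one_lt_of_neg hQ (by linarith)
  convert hasSum_log_prod_one_sub_zpow_neg _ a hy using 1
  ext m
  rw [div_mul_eq_mul_div, sum_mul]
  congr 1
  refine sum_congr rfl fun k _ => ?_
  rw [sub_eq_add_neg, Real.rpow_add hQ0, Real.rpow_natCast, mul_pow, pow_mul, mul_assoc]

theorem tendsto_rpow_neg_atTop_nhdsNE_zero {b : ℝ} (hb : 1 < b) :
    Tendsto (fun s : ℝ => b ^ (-s)) atTop (𝓝[≠] 0) :=
  tendsto_nhdsWithin_iff.mpr
    ⟨(tendsto_rpow_atBot_of_base_gt_one b hb).comp tendsto_neg_atTop_atBot,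
      .of_forall fun _ => (Real.rpow_pos_of_pos (by linarith) _).ne'⟩

theorem stmt_1_general (q : ℕ) (hq : 2 ≤ q) (n : ℕ) (a : ℕ → ℤ) (c : ℕ+ → ℤ)
    (A : ℝ) (B : ℕ)
    (hgrow : ∀ m : ℕ+, |(c m : ℝ)| ≤ A * (q : ℝ) ^ (B * (m : ℕ)))
    (heq : ∀ s : ℝ, ((max n B : ℕ) : ℝ) + 1 < s →
      Real.exp (∑' m : ℕ+, ((c m : ℝ) / ((m : ℕ) : ℝ)) * (q : ℝ) ^ (-s * ((m : ℕ) : ℝ)))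
        = ∏ k ∈ Finset.range (n + 1), ((1 : ℝ) - (q : ℝ) ^ ((k : ℝ) - s)) ^ (-(a k))) :
    ∀ m : ℕ+, c m = ∑ k ∈ Finset.range (n + 1), a k * (q : ℤ) ^ (k * (m : ℕ)) := by
  have hq1 : (1 : ℝ) < q := by exact_mod_cast hq
  set N : ℕ → ℝ := fun m => ∑ k ∈ range (n + 1), (a k : ℝ) * (q : ℝ) ^ (k * m)
  have hdiff : ∀ s : ℝ, ((max n B : ℕ) : ℝ) + 1 < s →
      HasSum (fun m : ℕ+ => ((c m : ℝ) - N m) / m * ((q : ℝ) ^ (-s)) ^ (m : ℕ)) 0 := by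
    intro s hs
    obtain ⟨hn, hB⟩ : (n : ℝ) ≤ max n B ∧ (B : ℝ) ≤ max n B := by norm_cast; omega
    have hsum : Summable fun m : ℕ+ => (c m : ℝ) / m * ((q : ℝ) ^ (-s)) ^ (m : ℕ) := by
      refine summable_pnat_div_mul_pow_of_abs_le (A := A) (ρ := (q : ℝ) ^ B) (fun m => ?_)
        (by positivity) (by positivity) ?_
      · simpa only [pow_mul] using hgrow m
      · rw [← Real.rpow_natCast, ← Real.rpow_add (by positivity)]
        exact Real.rpow_lt_one_of_one_lt_of_neg hq1 (by linarith)
    have hlog : ∑' m : ℕ+, (c m : ℝ) / m * ((q : ℝ) ^ (-s)) ^ (m : ℕ)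
        = Real.log (∏ k ∈ range (n + 1), (1 - (q : ℝ) ^ ((k : ℝ) - s)) ^ (-a k)) := by
      simp_rw [← heq s hs, Real.log_exp, Real.rpow_mul_natCast (Nat.cast_nonneg q)]
    simpa [sub_div, sub_mul, hlog] using
      hsum.hasSum.sub (hasSum_log_prod_one_sub_rpow_sub_zpow_neg hq1 n a (s := s) (by linarith))
  have hcoeff : (fun m : ℕ+ => ((c m : ℝ) - N m) / m) = 0 :=
    eq_zero_of_frequently_hasSum_pnat_zero ((tendsto_rpow_neg_atTop_nhdsNE_zero hq1).frequently
      ((eventually_gt_atTop _).mono hdiff).frequently)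
  intro m
  have hm : (c m : ℝ) = N m := by
    simpa [sub_eq_zero] using congrFun hcoeff m
  simp only [N] at hm
  exact_mod_cast hm

/-- (ii) ⇒ (iii) of the main theorem on schemes of `F_{1^ℓ}`-type: if the local zeta function
`exp(∑_{m≥1} c(m)/m · q^{-sm})` of a counting function `c` over `F_q` agrees, for all real
`s > max(n, B) + 1`, with the Euler factor `∏_{k=0}^n (1 - q^{k-s})^{-a_k}`, then
`c(m) = ∑_{k=0}^n a_k q^{km}` for all `m ≥ 1`. -/
theorem stmt_1 (q : ℕ) (hq : 2 ≤ q) (n : ℕ) (a : ℕ → ℤ) (c : ℕ+ → ℤ)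
    (A : ℝ) (hA : 0 ≤ A) (B : ℕ)
    (hgrow : ∀ m : ℕ+, |(c m : ℝ)| ≤ A * (q : ℝ) ^ (B * (m : ℕ)))
    (heq : ∀ s : ℝ, ((max n B : ℕ) : ℝ) + 1 < s →
      Real.exp (∑' m : ℕ+, ((c m : ℝ) / ((m : ℕ) : ℝ)) * (q : ℝ) ^ (-s * ((m : ℕ) : ℝ)))
        = ∏ k ∈ Finset.range (n + 1), ((1 : ℝ) - (q : ℝ) ^ ((k : ℝ) - s)) ^ (-(a k))) :
    ∀ m : ℕ+, c m = ∑ k ∈ Finset.range (n + 1), a k * (q : ℤ) ^ (k * (m : ℕ)) :=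
  stmt_1_general q hq n a c A B hgrow heq
end

section
/- Let n be a natural number, a_0,…,a_n integers, ℓ ≥ 1 an integer, and s a complex number with Re(s) > n + 1/ℓ. Then the family (∏_{k=0}^n (1 − p^{ℓ(k−s)})^{−a_k})_{p prime}, indexed by the prime numbers, is multipliable, and its product satisfies ∏_{p prime} ∏_{k=0}^n (1 − p^{ℓ(k−s)})^{−a_k} = ∏_{k=0}^n ζ(ℓ(s−k))^{a_k}, where ζ is the Riemann zeta function, p^{ℓ(k−s)} is the principal complex power of the positive real p, and the integer exponents are taken as zpow (each factor is nonzero since Re(ℓ(s−k)) > 1 for 0 ≤ k ≤ n, so ζ(ℓ(s−k)) ≠ 0). -/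
theorem HasProd.zpow₀ {ι K : Type*} [CommGroupWithZero K] [TopologicalSpace K] [ContinuousMul K]
    [ContinuousInv₀ K] {L : SummationFilter ι} {f : ι → K} {a : K} (h : HasProd f a L)
    (ha : a ≠ 0) (m : ℤ) : HasProd (fun i ↦ f i ^ m) (a ^ m) L := by
  cases m with
  | ofNat m => simpa using h.pow m
  | negSucc m => simpa [zpow_negSucc] using (h.pow (m + 1)).inv₀ (pow_ne_zero _ ha)

theorem riemannZeta_zpow_eulerProduct_hasProd {w : ℂ} (hw : 1 < w.re) (m : ℤ) :
    HasProd (fun p : Nat.Primes ↦ (1 - (p : ℂ) ^ (-w)) ^ (-m)) (riemannZeta w ^ m) := by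
  simpa [inv_zpow'] using
    (riemannZeta_eulerProduct_hasProd hw).zpow₀ (riemannZeta_ne_zero_of_one_lt_re hw) m

theorem one_lt_re_natCast_mul_sub_natCast {ℓ k : ℕ} {s : ℂ} (hℓ : 1 ≤ ℓ)
    (hs : (k : ℝ) + 1 / (ℓ : ℝ) < s.re) : 1 < ((ℓ : ℂ) * (s - k)).re := by
  have hℓ₀ : (0 : ℝ) < ℓ := by exact_mod_cast hℓ
  have : 1 / (ℓ : ℝ) < s.re - k := lt_sub_iff_add_lt'.mpr hs
  rw [div_lt_iff₀' hℓ₀] at this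
  simpa using this

/-- (ii) ⇔ (i) of the main theorem on schemes of `F_{1^ℓ}`-type: the product over all primes of
the local Euler factors `∏_{k=0}^n (1 - p^{ℓ(k-s)})^{-a_k}` is multipliable and equals
`∏_{k=0}^n ζ(ℓ(s-k))^{a_k}` for `Re(s) > n + 1/ℓ`. -/
theorem stmt_2 (n : ℕ) (a : ℕ → ℤ) (ℓ : ℕ) (hℓ : 1 ≤ ℓ) (s : ℂ)
    (hs : (n : ℝ) + 1 / (ℓ : ℝ) < s.re) :
    Multipliable (fun p : Nat.Primes =>
      ∏ k ∈ Finset.range (n + 1),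
        ((1 : ℂ) - ((p : ℕ) : ℂ) ^ ((ℓ : ℂ) * ((k : ℂ) - s))) ^ (-(a k)))
    ∧ (∏' p : Nat.Primes,
        ∏ k ∈ Finset.range (n + 1),
          ((1 : ℂ) - ((p : ℕ) : ℂ) ^ ((ℓ : ℂ) * ((k : ℂ) - s))) ^ (-(a k)))
      = ∏ k ∈ Finset.range (n + 1), (riemannZeta ((ℓ : ℂ) * (s - (k : ℂ)))) ^ (a k) := by
  have hprod : HasProd (fun p : Nat.Primes =>
      ∏ k ∈ Finset.range (n + 1),
        ((1 : ℂ) - ((p : ℕ) : ℂ) ^ ((ℓ : ℂ) * ((k : ℂ) - s))) ^ (-(a k)))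
      (∏ k ∈ Finset.range (n + 1), (riemannZeta ((ℓ : ℂ) * (s - (k : ℂ)))) ^ (a k)) := by
    refine hasProd_prod fun k hk ↦ ?_
    have hkn : (k : ℝ) ≤ n := by exact_mod_cast Finset.mem_range_succ_iff.mp hk
    have hre : 1 < ((ℓ : ℂ) * (s - k)).re :=
      one_lt_re_natCast_mul_sub_natCast hℓ ((add_le_add_left hkn _).trans_lt hs)
    convert riemannZeta_zpow_eulerProduct_hasProd hre (a k) using 4
    congr 1
    ring
  exact ⟨hprod.multipliable, hprod.tprod_eq⟩
end

section
/- Let n be a natural number, a_0,…,a_n integers, ℓ ≥ 1 an integer, and s a complex number with s ∉ {0, 1, …, n}. Then, as the complex variable p tends to 1 within ℂ \ {1} (along the punctured neighborhood filter of 1), the function p ↦ ( ∏_{k=0}^n (1 − p^{ℓ(k−s)})^{−a_k} ) · (p − 1)^{∑_{k=0}^n a_k} tends to ∏_{k=0}^n (ℓ(s−k))^{−a_k}. Here p^{ℓ(k−s)} denotes the principal complex power, the integer exponents are taken as zpow, and for p ≠ 1 sufficiently close to 1 each base 1 − p^{ℓ(k−s)} is nonzero so the expression is well defined. -/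
/-!
Each factor `1 - p^{ℓ(k-s)}` vanishes to first order at `p = 1`: the difference quotient
`(1 - p^c) / (p - 1)` tends to `-c` by the derivative of `p ↦ p^c` at `1`. Dividing the `k`-th
factor by `p - 1` costs exactly `(p - 1)^{a_k}`, which the correction `(p - 1)^{∑ a_k}` supplies,
and the limit of the rescaled product is `∏ (ℓ(s-k))^{-a_k}`, finite since `s ≠ k`.
-/

open Filter Topology

lemma zpow_sum₀ {ι G₀ : Type*} [CommGroupWithZero G₀] {x : G₀} (hx : x ≠ 0) (s : Finset ι)
    (f : ι → ℤ) : x ^ (∑ i ∈ s, f i) = ∏ i ∈ s, x ^ f i := by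
  induction s using Finset.cons_induction with
  | empty => simp
  | cons i s hi ih => rw [Finset.sum_cons, Finset.prod_cons, zpow_add₀ hx, ih]

lemma prod_div_zpow_neg {ι K : Type*} [Field K] (s : Finset ι) (f : ι → K) {g : K} (hg : g ≠ 0)
    (a : ι → ℤ) :
    ∏ i ∈ s, (f i / g) ^ (-a i) = (∏ i ∈ s, f i ^ (-a i)) * g ^ (∑ i ∈ s, a i) := by
  rw [zpow_sum₀ hg, ← Finset.prod_mul_distrib]
  refine Finset.prod_congr rfl fun i _ => ?_
  rw [div_zpow, zpow_neg g, div_inv_eq_mul]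

lemma tendsto_prod_zpow_neg_mul_zpow_sum {α ι K : Type*} [Field K] [TopologicalSpace K]
    [IsTopologicalDivisionRing K] {l : Filter α} (s : Finset ι) {f : ι → α → K} {g : α → K}
    {L : ι → K} (a : ι → ℤ) (hg : ∀ᶠ x in l, g x ≠ 0)
    (hfg : ∀ i ∈ s, Tendsto (fun x => f i x / g x) l (𝓝 (L i))) (hL : ∀ i ∈ s, L i ≠ 0) :
    Tendsto (fun x => (∏ i ∈ s, f i x ^ (-a i)) * g x ^ (∑ i ∈ s, a i)) l
      (𝓝 (∏ i ∈ s, L i ^ (-a i))) := by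
  have hprod : Tendsto (fun x => ∏ i ∈ s, (f i x / g x) ^ (-a i)) l
      (𝓝 (∏ i ∈ s, L i ^ (-a i))) :=
    tendsto_finsetProd s fun i hi => (hfg i hi).zpow₀ _ (Or.inl (hL i hi))
  refine hprod.congr' ?_
  filter_upwards [hg] with x hx
  exact prod_div_zpow_neg s (fun i => f i x) hx a

lemma tendsto_one_sub_cpow_div_sub_one (c : ℂ) :
    Tendsto (fun p : ℂ => (1 - p ^ c) / (p - 1)) (𝓝[≠] 1) (𝓝 (-c)) := by
  have hderiv : HasDerivAt (fun p : ℂ => p ^ c) c 1 := by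
    simpa using (hasDerivAt_id (1 : ℂ)).cpow_const (c := c) (by simp)
  refine (hasDerivAt_iff_tendsto_slope.mp hderiv).neg.congr' ?_
  filter_upwards with p
  rw [slope_def_field, Complex.one_cpow, ← neg_div, neg_sub]

/-- The `F_{1^ℓ}`-zeta function as a limit: as the complex variable `p` tends to `1` within
`ℂ \ {1}`, the function `p ↦ (∏_{k=0}^n (1 - p^{ℓ(k-s)})^{-a_k}) · (p-1)^{∑ a_k}` tends to
`∏_{k=0}^n (ℓ(s-k))^{-a_k}`, provided `s ∉ {0, 1, …, n}`. -/
theorem stmt_3 (n : ℕ) (a : ℕ → ℤ) (ℓ : ℕ) (hℓ : 1 ≤ ℓ) (s : ℂ)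
    (hs : ∀ k ∈ Finset.range (n + 1), s ≠ (k : ℂ)) :
    Filter.Tendsto
      (fun p : ℂ =>
        (∏ k ∈ Finset.range (n + 1), ((1 : ℂ) - p ^ ((ℓ : ℂ) * ((k : ℂ) - s))) ^ (-(a k)))
          * (p - 1) ^ (∑ k ∈ Finset.range (n + 1), a k))
      (nhdsWithin (1 : ℂ) {(1 : ℂ)}ᶜ)
      (nhds (∏ k ∈ Finset.range (n + 1), ((ℓ : ℂ) * (s - (k : ℂ))) ^ (-(a k)))) := by
  have hℓ0 : (ℓ : ℂ) ≠ 0 := Nat.cast_ne_zero.mpr (by omega)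
  refine tendsto_prod_zpow_neg_mul_zpow_sum _ a ?_ (fun k _ => ?_)
    (fun k hk => mul_ne_zero hℓ0 (sub_ne_zero.mpr (hs k hk)))
  · filter_upwards [self_mem_nhdsWithin] with p hp
    exact sub_ne_zero.mpr hp
  · have hc : -((ℓ : ℂ) * ((k : ℂ) - s)) = (ℓ : ℂ) * (s - k) := by ring
    simpa only [hc] using tendsto_one_sub_cpow_div_sub_one ((ℓ : ℂ) * ((k : ℂ) - s))
end

section
/- Fix integers ℓ ≥ 1 and m ≥ 0, and let M = WithZero (Multiplicative (ZMod ℓ)) be the cyclic group μ_ℓ of order ℓ with an absorbing zero adjoined. On the set of nonzero tuples x : Fin (m+1) → M (those with at least one nonzero entry), define x ∼ y iff there exists c ∈ Multiplicative (ZMod ℓ) with y(i) = (c : M)·x(i) for all i. Then ∼ is an equivalence relation and the set of equivalence classes is finite of cardinality ∑_{i=0}^{m} (ℓ+1)^i. -/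
/-!
A class of nonzero tuples has a unique representative whose last nonzero entry is `1`: scale
by the inverse of that entry. Such representatives with last nonzero entry in position `i` are
determined by the `i` free entries before it, so `P(m, F_{1^ℓ})` is the disjoint union of the
cells `F_{1^ℓ}^i` for `i ≤ m`, of cardinality `(ℓ + 1)^i` each.
-/

/-- The monoid `F_{1^ℓ}`: the cyclic group `μ_ℓ` of order `ℓ` with an absorbing zero. -/
abbrev FOneExt (ℓ : ℕ) : Type := WithZero (Multiplicative (ZMod ℓ))

/-- The set of nonzero `(m+1)`-tuples over `F_{1^ℓ}` (those with at least one nonzero entry). -/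
def NonzeroTuples (ℓ m : ℕ) : Type :=
  {x : Fin (m + 1) → FOneExt ℓ // ∃ i, x i ≠ 0}

/-- Proportionality: `x ∼ y` iff `y = c · x` for some scalar `c ∈ μ_ℓ`. -/
def projRel (ℓ m : ℕ) (x y : NonzeroTuples ℓ m) : Prop :=
  ∃ c : Multiplicative (ZMod ℓ), ∀ i, y.1 i = (c : FOneExt ℓ) * x.1 i

open Finset

abbrev NonzeroTuple (G : Type*) (n : ℕ) : Type _ :=
  {x : Fin n → WithZero G // ∃ i, x i ≠ 0}

namespace NonzeroTuple

variable {G : Type*} {n : ℕ}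

def Proportional [Mul G] (x y : NonzeroTuple G n) : Prop :=
  ∃ c : G, ∀ i, y.1 i = c * x.1 i

/-- A tuple normalized to have last nonzero entry `1` at position `i`, given by its first `i`
entries. -/
abbrev NormalForm (G : Type*) (n : ℕ) : Type _ :=
  Σ i : Fin n, Fin i → WithZero G

theorem proportional_equivalence [Group G] : Equivalence (Proportional (G := G) (n := n)) where
  refl _ := ⟨1, fun _ => by rw [WithZero.coe_one, one_mul]⟩
  symm := by
    rintro x y ⟨c, hc⟩
    exact ⟨c⁻¹, fun i => by rw [hc, ← mul_assoc, ← WithZero.coe_mul, inv_mul_cancel,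
      WithZero.coe_one, one_mul]⟩
  trans := by
    rintro x y z ⟨c, hc⟩ ⟨d, hd⟩
    exact ⟨d * c, fun i => by rw [hd, hc, ← mul_assoc, WithZero.coe_mul]⟩

open Classical in
noncomputable def lastNonzero (x : NonzeroTuple G n) : Fin n :=
  (univ.filter fun i => x.1 i ≠ 0).max' (x.2.imp fun i hi => by simpa using hi)

open Classical in
theorem apply_lastNonzero_ne_zero (x : NonzeroTuple G n) : x.1 (lastNonzero x) ≠ 0 := by
  unfold lastNonzero
  exact (mem_filter.1 (max'_mem (univ.filter fun i => x.1 i ≠ 0) _)).2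

theorem apply_eq_zero_of_lastNonzero_lt (x : NonzeroTuple G n) {j : Fin n}
    (h : lastNonzero x < j) : x.1 j = 0 := by
  classical
  by_contra hj
  exact h.not_ge (le_max' _ j (mem_filter.2 ⟨mem_univ j, hj⟩))

theorem lastNonzero_eq (x : NonzeroTuple G n) {i : Fin n} (hi : x.1 i ≠ 0)
    (h : ∀ j, i < j → x.1 j = 0) : lastNonzero x = i := by
  by_contra hne
  rcases lt_or_gt_of_ne hne with hlt | hgt
  · exact hi (apply_eq_zero_of_lastNonzero_lt x hlt)
  · exact apply_lastNonzero_ne_zero x (h _ hgt)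

section One

variable [One G]

def ofNormalForm (s : NormalForm G n) : NonzeroTuple G n :=
  ⟨fun k => if h : (k : ℕ) < s.1 then s.2 ⟨k, h⟩ else if k = s.1 then 1 else 0,
    ⟨s.1, by simpa using WithZero.coe_ne_zero (a := (1 : G))⟩⟩

theorem ofNormalForm_apply_of_lt (s : NormalForm G n) {k : Fin n} (h : (k : ℕ) < s.1) :
    (ofNormalForm s).1 k = s.2 ⟨k, h⟩ :=
  dif_pos h

theorem ofNormalForm_apply_self (s : NormalForm G n) : (ofNormalForm s).1 s.1 = 1 := by
  simp [ofNormalForm]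

theorem ofNormalForm_apply_of_gt (s : NormalForm G n) {k : Fin n} (h : s.1 < k) :
    (ofNormalForm s).1 k = 0 := by
  simp [ofNormalForm, h.ne', not_lt.2 h.le]

theorem lastNonzero_ofNormalForm (s : NormalForm G n) : lastNonzero (ofNormalForm s) = s.1 :=
  lastNonzero_eq _ (by rw [ofNormalForm_apply_self]; exact WithZero.coe_ne_zero)
    fun _ => ofNormalForm_apply_of_gt s

end One

section Group

variable [Group G]

noncomputable def normalize (x : NonzeroTuple G n) : NormalForm G n :=
  ⟨lastNonzero x, fun j => (x.1 (lastNonzero x))⁻¹ * x.1 (Fin.castLE (lastNonzero x).isLt.le j)⟩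

theorem normalize_ofNormalForm (s : NormalForm G n) : normalize (ofNormalForm s) = s := by
  have hlast := lastNonzero_ofNormalForm s
  refine Sigma.ext hlast ((Fin.heq_fun_iff (congrArg Fin.val hlast)).2 fun j => ?_)
  have hj : (j : ℕ) < s.1 := hlast ▸ j.isLt
  simp only [normalize, hlast, ofNormalForm_apply_self, inv_one, one_mul]
  exact ofNormalForm_apply_of_lt s hj

theorem proportional_ofNormalForm_normalize (x : NonzeroTuple G n) :
    Proportional (ofNormalForm (normalize x)) x := by
  have hx := apply_lastNonzero_ne_zero x
  refine ⟨WithZero.unzero hx, fun k => ?_⟩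
  rw [WithZero.coe_unzero]
  rcases lt_trichotomy k (lastNonzero x) with hlt | rfl | hgt
  · rw [ofNormalForm_apply_of_lt (normalize x) hlt]
    exact (mul_inv_cancel_left₀ hx _).symm
  · rw [show (ofNormalForm (normalize x)).1 (lastNonzero x) = 1 from
      ofNormalForm_apply_self (normalize x), mul_one]
  · rw [ofNormalForm_apply_of_gt (normalize x) hgt, mul_zero,
      apply_eq_zero_of_lastNonzero_lt x hgt]

theorem normalize_eq_of_proportional {x y : NonzeroTuple G n} (h : Proportional x y) :
    normalize x = normalize y := by
  obtain ⟨c, hc⟩ := h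
  have hc0 : (c : WithZero G) ≠ 0 := WithZero.coe_ne_zero
  have hlast : lastNonzero y = lastNonzero x :=
    lastNonzero_eq y (by rw [hc]; exact mul_ne_zero hc0 (apply_lastNonzero_ne_zero x))
      fun j hj => by rw [hc, apply_eq_zero_of_lastNonzero_lt x hj, mul_zero]
  refine Sigma.ext hlast.symm ((Fin.heq_fun_iff (congrArg Fin.val hlast.symm)).2 fun j => ?_)
  simp only [normalize, hlast, hc, mul_inv_rev, mul_assoc, inv_mul_cancel_left₀ hc0]
  rfl

noncomputable def quotEquivNormalForm : Quot (Proportional (G := G) (n := n)) ≃ NormalForm G n where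
  toFun := Quot.lift normalize fun _ _ => normalize_eq_of_proportional
  invFun s := Quot.mk _ (ofNormalForm s)
  left_inv := Quot.ind fun x => Quot.sound (proportional_ofNormalForm_normalize x)
  right_inv := normalize_ofNormalForm

theorem card_quot_proportional [Finite G] :
    Nat.card (Quot (Proportional (G := G) (n := n))) =
      ∑ i ∈ range n, (Nat.card G + 1) ^ i := by
  have : Finite (WithZero G) := inferInstanceAs (Finite (Option G))
  have hcard : Nat.card (WithZero G) = Nat.card G + 1 := Finite.card_option
  rw [Nat.card_congr quotEquivNormalForm, Nat.card_sigma, ← Fin.sum_univ_eq_sum_range]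
  simp only [Nat.card_fun, hcard, Nat.card_eq_fintype_card, Fintype.card_fin]

end Group

end NonzeroTuple

/-- Proportionality is an equivalence relation on the nonzero `(m+1)`-tuples over `F_{1^ℓ}`,
and the set of equivalence classes (the projective frame `P(m, F_{1^ℓ})`) is finite of
cardinality `∑_{i=0}^m (ℓ+1)^i`. -/
theorem stmt_9 (ℓ m : ℕ) (hℓ : 1 ≤ ℓ) :
    Equivalence (projRel ℓ m)
    ∧ Nat.card (Quot (projRel ℓ m)) = ∑ i ∈ Finset.range (m + 1), (ℓ + 1) ^ i := by
  have : NeZero ℓ := ⟨by omega⟩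
  have hcard : Nat.card (Multiplicative (ZMod ℓ)) = ℓ := Nat.card_zmod ℓ
  refine ⟨NonzeroTuple.proportional_equivalence, ?_⟩
  have hquot := NonzeroTuple.card_quot_proportional (G := Multiplicative (ZMod ℓ)) (n := m + 1)
  rwa [hcard] at hquot
end

section
/- Let q ≥ 2 be a natural number, n a natural number, and s a complex number with Re(s) > n. Then the series ∑_{m=1}^∞ (∑_{k=0}^n q^{km})/m · q^{−sm} converges absolutely, 1 − q^{k−s} ≠ 0 for every k ∈ {0,…,n}, and exp( ∑_{m=1}^∞ (∑_{k=0}^n q^{km})/m · q^{−sm} ) = ∏_{k=0}^n (1 − q^{k−s})^{−1}, where q^{k−s} and q^{−sm} denote principal complex powers of the positive real q. -/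
/-!
Writing `z_k = q^(k-s)`, the `m`-th term of the series is `∑_k z_k^m / m`, and
`‖z_k‖ = q^(k - Re s) < 1`. So the series splits into the `n + 1` Taylor series
`∑_m z_k^m / m = -log (1 - z_k)`, each absolutely convergent, and exponentiating turns the sum of
logarithms into the product of the `(1 - z_k)⁻¹`.
-/

open Complex Finset

lemma one_sub_ne_zero_of_norm_lt_one {z : ℂ} (hz : ‖z‖ < 1) : 1 - z ≠ 0 := by
  rw [sub_ne_zero]
  rintro rfl
  simp at hz

lemma hasSum_pnat_pow_div {z : ℂ} (hz : ‖z‖ < 1) :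
    HasSum (fun m : ℕ+ => z ^ (m : ℕ) / (m : ℕ)) (-log (1 - z)) := by
  refine (hasSum_pnat_iff (f := fun n : ℕ => z ^ n / n)).mpr ?_
  simpa using hasSum_taylorSeries_neg_log hz

lemma summable_norm_pnat_pow_div {z : ℂ} (hz : ‖z‖ < 1) :
    Summable fun m : ℕ+ => ‖z ^ (m : ℕ) / (m : ℕ)‖ := by
  refine ((summable_geometric_of_lt_one (norm_nonneg z) hz).comp_injective
    PNat.coe_injective).of_nonneg_of_le (fun _ => norm_nonneg _) fun m => ?_
  rw [norm_div, norm_pow, norm_natCast]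
  exact div_le_self (by positivity) (by exact_mod_cast m.pos)

section FiniteFamily

variable {ι : Type*} (s : Finset ι) {z : ι → ℂ}

lemma hasSum_pnat_sum_pow_div (hz : ∀ i ∈ s, ‖z i‖ < 1) :
    HasSum (fun m : ℕ+ => (∑ i ∈ s, z i ^ (m : ℕ)) / (m : ℕ)) (∑ i ∈ s, -log (1 - z i)) := by
  simp_rw [sum_div]
  exact hasSum_sum fun i hi => hasSum_pnat_pow_div (hz i hi)

lemma summable_norm_pnat_sum_pow_div (hz : ∀ i ∈ s, ‖z i‖ < 1) :
    Summable fun m : ℕ+ => ‖(∑ i ∈ s, z i ^ (m : ℕ)) / (m : ℕ)‖ := by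
  refine (summable_sum fun i hi => summable_norm_pnat_pow_div (hz i hi)).of_nonneg_of_le
    (fun _ => norm_nonneg _) fun m => ?_
  rw [sum_div]
  exact norm_sum_le _ _

lemma exp_tsum_pnat_sum_pow_div (hz : ∀ i ∈ s, ‖z i‖ < 1) :
    exp (∑' m : ℕ+, (∑ i ∈ s, z i ^ (m : ℕ)) / (m : ℕ)) = ∏ i ∈ s, (1 - z i)⁻¹ := by
  rw [(hasSum_pnat_sum_pow_div s hz).tsum_eq, exp_sum]
  refine prod_congr rfl fun i hi => ?_
  rw [exp_neg, exp_log (one_sub_ne_zero_of_norm_lt_one (hz i hi))]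

end FiniteFamily

lemma pow_mul_cpow_neg_mul {x : ℂ} (hx : x ≠ 0) (k m : ℕ) (s : ℂ) :
    x ^ (k * m) * x ^ (-s * m) = (x ^ ((k : ℂ) - s)) ^ m := by
  rw [cpow_sub _ _ hx, cpow_natCast, div_pow, ← pow_mul, mul_comm (-s), cpow_nat_mul, cpow_neg,
    inv_pow, div_eq_mul_inv]

lemma norm_natCast_cpow_lt_one {q : ℕ} (hq : 1 < q) {w : ℂ} (hw : w.re < 0) :
    ‖(q : ℂ) ^ w‖ < 1 := by
  rw [norm_natCast_cpow_of_pos (by omega)]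
  exact Real.rpow_lt_one_of_one_lt_of_neg (by exact_mod_cast hq) hw

/-- The local zeta function of projective `n`-space over `F_q`: for `Re(s) > n`, the series
`∑_{m≥1} (∑_{k=0}^n q^{km})/m · q^{-sm}` converges absolutely and
`exp(∑_{m≥1} (∑_{k=0}^n q^{km})/m · q^{-sm}) = ∏_{k=0}^n (1 - q^{k-s})⁻¹`. -/
theorem stmt_11 (q : ℕ) (hq : 2 ≤ q) (n : ℕ) (s : ℂ) (hs : (n : ℝ) < s.re) :
    Summable (fun m : ℕ+ =>
      ‖((∑ k ∈ Finset.range (n + 1), (q : ℂ) ^ (k * (m : ℕ))) / ((m : ℕ) : ℂ))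
        * (q : ℂ) ^ (-s * ((m : ℕ) : ℂ))‖)
    ∧ (∀ k ∈ Finset.range (n + 1), (1 : ℂ) - (q : ℂ) ^ ((k : ℂ) - s) ≠ 0)
    ∧ Complex.exp (∑' m : ℕ+,
        ((∑ k ∈ Finset.range (n + 1), (q : ℂ) ^ (k * (m : ℕ))) / ((m : ℕ) : ℂ))
          * (q : ℂ) ^ (-s * ((m : ℕ) : ℂ)))
      = ∏ k ∈ Finset.range (n + 1), ((1 : ℂ) - (q : ℂ) ^ ((k : ℂ) - s))⁻¹ := by
  have hz : ∀ k ∈ range (n + 1), ‖(q : ℂ) ^ ((k : ℂ) - s)‖ < 1 := fun k hk => by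
    have hkn : (k : ℝ) ≤ n := by exact_mod_cast Nat.lt_succ_iff.mp (mem_range.mp hk)
    exact norm_natCast_cpow_lt_one (by omega) (by simp only [sub_re, natCast_re]; linarith)
  have hterm : ∀ m : ℕ+, ((∑ k ∈ range (n + 1), (q : ℂ) ^ (k * (m : ℕ))) / ((m : ℕ) : ℂ))
      * (q : ℂ) ^ (-s * ((m : ℕ) : ℂ)) =
      (∑ k ∈ range (n + 1), ((q : ℂ) ^ ((k : ℂ) - s)) ^ (m : ℕ)) / ((m : ℕ) : ℂ) := by
    have hq0 : (q : ℂ) ≠ 0 := by exact_mod_cast (show q ≠ 0 by omega)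
    intro m
    rw [div_mul_eq_mul_div, sum_mul]
    simp_rw [pow_mul_cpow_neg_mul hq0]
  simp only [hterm]
  exact ⟨summable_norm_pnat_sum_pow_div _ hz, fun k hk => one_sub_ne_zero_of_norm_lt_one (hz k hk),
    exp_tsum_pnat_sum_pow_div _ hz⟩
end
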